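/- Let H₁ = √6/3, A_max(h) = (√3/4)(1 + √6·h − 3h²) on [0,H₁], and let H₂ = √2, A_min(h) = 2h² for h ∈ [0, H₂/2], A_min(h) = 2(H₂ − h)² for h ∈ [H₂/2, H₂]. Then (∫₀^{H₁} A_max(h)·h^{-1/2} dh) / (∫₀^{H₂} A_min(h)·h^{-1/2} dh) = 19·3^{1/4}·(8 + 5√2)/224. -/

import Mathlib

/-- Cross-sectional area function of a unit-edge regular octahedron resting on a face
(`H₁ = √6/3` is the distance between two opposite faces). -/
noncomputable def octAreaMax (h : ℝ) : ℝ :=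
  Real.sqrt 3 / 4 * (1 + Real.sqrt 6 * h - 3 * h ^ 2)

/-- Cross-sectional area function of a unit-edge regular octahedron positioned with a
big diagonal (of length `H₂ = √2`) vertical. -/
noncomputable def octAreaMin (h : ℝ) : ℝ :=
  if h ≤ Real.sqrt 2 / 2 then 2 * h ^ 2 else 2 * (Real.sqrt 2 - h) ^ 2

namespace OctTorricelli

open Real

lemma int_rpow (b : ℝ) (r : ℝ) (hr : -1 < r) :
    ∫ x in (0:ℝ)..b, x ^ r = b ^ (r+1) / (r+1) := by
  rw [integral_rpow (Or.inl hr), Real.zero_rpow (by linarith), sub_zero]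

lemma sqrt_inv_eq (x : ℝ) (hx : 0 ≤ x) : (Real.sqrt x)⁻¹ = x ^ (-((1:ℝ)/2)) := by
  rw [Real.sqrt_eq_rpow, ← Real.rpow_neg hx]

lemma rpow_half_eq (x : ℝ) : x ^ ((1:ℝ)/2) = Real.sqrt x := (Real.sqrt_eq_rpow x).symm

lemma rpow_3half_eq (x : ℝ) (hx : 0 ≤ x) : x ^ ((3:ℝ)/2) = x * Real.sqrt x := by
  rw [show (3:ℝ)/2 = 1 + 1/2 by norm_num, Real.rpow_add' hx (by norm_num), Real.rpow_one,
    rpow_half_eq]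

lemma rpow_intable (r : ℝ) (hr : -1 < r) (c a b : ℝ) :
    IntervalIntegrable (fun x : ℝ => c * x ^ r) MeasureTheory.volume a b :=
  (intervalIntegral.intervalIntegrable_rpow' hr).const_mul c

lemma x_mul_rpow (x : ℝ) (hx : 0 ≤ x) : x * x ^ (-((1:ℝ)/2)) = x ^ ((1:ℝ)/2) := by
  nth_rewrite 1 [← Real.rpow_one x]
  rw [← Real.rpow_add' hx (by norm_num)]
  norm_num

lemma x2_mul_rpow (x : ℝ) (hx : 0 ≤ x) : x ^ 2 * x ^ (-((1:ℝ)/2)) = x ^ ((3:ℝ)/2) := by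
  rw [← Real.rpow_natCast x 2, ← Real.rpow_add' hx (by norm_num)]
  norm_num

lemma numer_congr (x : ℝ) (hx : 0 ≤ x) :
    octAreaMax x * (Real.sqrt x)⁻¹ =
      Real.sqrt 3 / 4 * x ^ (-((1:ℝ)/2)) + Real.sqrt 3 / 4 * Real.sqrt 6 * x ^ ((1:ℝ)/2)
        - 3 * (Real.sqrt 3 / 4) * x ^ ((3:ℝ)/2) := by
  rcases eq_or_lt_of_le hx with h0 | h0
  · simp [octAreaMax, ← h0, Real.zero_rpow, show -((1:ℝ)/2) ≠ 0 by norm_num,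
      show ((1:ℝ)/2) ≠ 0 by norm_num, show ((3:ℝ)/2) ≠ 0 by norm_num]
  · have hs : 0 < Real.sqrt x := Real.sqrt_pos.2 h0
    have hsq : Real.sqrt x * Real.sqrt x = x := Real.mul_self_sqrt hx
    rw [sqrt_inv_eq x hx, Real.rpow_neg hx, rpow_half_eq, rpow_3half_eq x hx, octAreaMax]
    field_simp
    linear_combination (3*x - Real.sqrt 6) * hsq

lemma numer_val :
    ∫ h in (0:ℝ)..(Real.sqrt 6 / 3), octAreaMax h * (Real.sqrt h)⁻¹
      = 19 * Real.sqrt 3 * ((Real.sqrt 6 / 3) ^ ((1:ℝ)/2)) / 30 := by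
  have hb : (0:ℝ) ≤ Real.sqrt 6 / 3 := by positivity
  rw [intervalIntegral.integral_congr (g := fun x =>
      Real.sqrt 3 / 4 * x ^ (-((1:ℝ)/2)) + Real.sqrt 3 / 4 * Real.sqrt 6 * x ^ ((1:ℝ)/2)
        - 3 * (Real.sqrt 3 / 4) * x ^ ((3:ℝ)/2))
    (fun x hx => numer_congr x (by
      rcases Set.mem_uIcc.1 hx with h | h
      · exact h.1
      · linarith [h.1, h.2, hb]))]
  rw [intervalIntegral.integral_sub ((rpow_intable _ (by norm_num) _ _ _).add
      (rpow_intable _ (by norm_num) _ _ _)) (rpow_intable _ (by norm_num) _ _ _),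
    intervalIntegral.integral_add (rpow_intable _ (by norm_num) _ _ _)
      (rpow_intable _ (by norm_num) _ _ _),
    intervalIntegral.integral_const_mul, intervalIntegral.integral_const_mul,
    intervalIntegral.integral_const_mul,
    int_rpow _ _ (by norm_num), int_rpow _ _ (by norm_num), int_rpow _ _ (by norm_num)]
  norm_num
  set u : ℝ := (Real.sqrt 6 / 3) ^ ((1:ℝ)/2) with hu
  have h32 : (Real.sqrt 6 / 3) ^ ((3:ℝ)/2) = u ^ (3:ℕ) := by
    rw [hu, ← Real.rpow_natCast (((Real.sqrt 6 / 3)) ^ ((1:ℝ)/2)) 3, ← Real.rpow_mul hb]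
    norm_num
  have h52 : (Real.sqrt 6 / 3) ^ ((5:ℝ)/2) = u ^ (5:ℕ) := by
    rw [hu, ← Real.rpow_natCast (((Real.sqrt 6 / 3)) ^ ((1:ℝ)/2)) 5, ← Real.rpow_mul hb]
    norm_num
  have hu2 : u ^ (2:ℕ) = Real.sqrt 6 / 3 := by
    rw [hu, ← Real.rpow_natCast (((Real.sqrt 6 / 3)) ^ ((1:ℝ)/2)) 2, ← Real.rpow_mul hb]
    norm_num
  have h6 : Real.sqrt 6 * Real.sqrt 6 = 6 := Real.mul_self_sqrt (by norm_num)
  have hu4 : u ^ (4:ℕ) = 2/3 := by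
    have h : u ^ (4:ℕ) = (u ^ (2:ℕ)) ^ (2:ℕ) := by ring
    rw [h, hu2, div_pow, Real.sq_sqrt (by norm_num : (0:ℝ) ≤ 6)]
    norm_num
  rw [h32, h52]
  linear_combination (-(Real.sqrt 3) * u^3/2) * hu2 + (Real.sqrt 3 * u/5) * hu4

lemma denom_congr1 (x : ℝ) (hx : 0 ≤ x) (hxc : x ≤ Real.sqrt 2 / 2) :
    octAreaMin x * (Real.sqrt x)⁻¹ = 2 * x ^ ((3:ℝ)/2) := by
  rw [octAreaMin, if_pos hxc, sqrt_inv_eq x hx, mul_assoc, x2_mul_rpow x hx]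

lemma denom_congr2 (x : ℝ) (hxc : Real.sqrt 2 / 2 ≤ x) :
    octAreaMin x * (Real.sqrt x)⁻¹ =
      4 * x ^ (-((1:ℝ)/2)) - 4 * Real.sqrt 2 * x ^ ((1:ℝ)/2) + 2 * x ^ ((3:ℝ)/2) := by
  have hx : 0 ≤ x := le_trans (by positivity) hxc
  have h2 : Real.sqrt 2 * Real.sqrt 2 = 2 := Real.mul_self_sqrt (by norm_num)
  have hval : octAreaMin x = 2 * (Real.sqrt 2 - x) ^ 2 := by
    rw [octAreaMin]
    split_ifs with h
    · have : x = Real.sqrt 2 / 2 := le_antisymm h hxc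
      rw [this]; ring
    · rfl
  have hpoly : 2 * (Real.sqrt 2 - x) ^ 2 = 4 - 4 * Real.sqrt 2 * x + 2 * x ^ 2 := by
    linear_combination 2 * h2
  rw [hval, hpoly, sqrt_inv_eq x hx, ← x_mul_rpow x hx, ← x2_mul_rpow x hx]
  ring

lemma denom_val :
    ∫ h in (0:ℝ)..Real.sqrt 2, octAreaMin h * (Real.sqrt h)⁻¹
      = 16 / 15 * ((Real.sqrt 2 / 2) ^ ((1:ℝ)/2)) * (4 * Real.sqrt 2 - 5) := by
  have h2 : Real.sqrt 2 * Real.sqrt 2 = 2 := Real.mul_self_sqrt (by norm_num)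
  have hc : (0:ℝ) ≤ Real.sqrt 2 / 2 := by positivity
  have hcb : Real.sqrt 2 / 2 ≤ Real.sqrt 2 := by
    have : 0 ≤ Real.sqrt 2 := Real.sqrt_nonneg 2
    linarith
  have hI1 : IntervalIntegrable (fun h => octAreaMin h * (Real.sqrt h)⁻¹)
      MeasureTheory.volume 0 (Real.sqrt 2 / 2) := by
    have hg := intervalIntegrable_iff.mp
      (rpow_intable ((3:ℝ)/2) (by norm_num) 2 0 (Real.sqrt 2 / 2))
    rw [intervalIntegrable_iff]
    refine hg.congr_fun ?_ measurableSet_uIoc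
    intro x hx
    rw [Set.uIoc_of_le hc] at hx
    exact (denom_congr1 x hx.1.le hx.2).symm
  have hI2 : IntervalIntegrable (fun h => octAreaMin h * (Real.sqrt h)⁻¹)
      MeasureTheory.volume (Real.sqrt 2 / 2) (Real.sqrt 2) := by
    have : IntervalIntegrable (fun x : ℝ =>
        4 * x ^ (-((1:ℝ)/2)) - 4 * Real.sqrt 2 * x ^ ((1:ℝ)/2) + 2 * x ^ ((3:ℝ)/2))
        MeasureTheory.volume (Real.sqrt 2 / 2) (Real.sqrt 2) :=
      ((rpow_intable _ (by norm_num) _ _ _).sub (rpow_intable _ (by norm_num) _ _ _)).add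
        (rpow_intable _ (by norm_num) _ _ _)
    have hg := intervalIntegrable_iff.mp this
    rw [intervalIntegrable_iff]
    refine hg.congr_fun ?_ measurableSet_uIoc
    intro x hx
    rw [Set.uIoc_of_le hcb] at hx
    exact (denom_congr2 x hx.1.le).symm
  rw [← intervalIntegral.integral_add_adjacent_intervals hI1 hI2]
  have e1 : ∫ h in (0:ℝ)..(Real.sqrt 2 / 2), octAreaMin h * (Real.sqrt h)⁻¹
      = ∫ x in (0:ℝ)..(Real.sqrt 2 / 2), 2 * x ^ ((3:ℝ)/2) := by
    refine intervalIntegral.integral_congr fun x hx => ?_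
    rw [Set.uIcc_of_le hc] at hx
    exact denom_congr1 x hx.1 hx.2
  have e2 : ∫ h in (Real.sqrt 2 / 2)..(Real.sqrt 2), octAreaMin h * (Real.sqrt h)⁻¹
      = ∫ x in (Real.sqrt 2 / 2)..(Real.sqrt 2),
          (4 * x ^ (-((1:ℝ)/2)) - 4 * Real.sqrt 2 * x ^ ((1:ℝ)/2) + 2 * x ^ ((3:ℝ)/2)) := by
    refine intervalIntegral.integral_congr fun x hx => ?_
    rw [Set.uIcc_of_le hcb] at hx
    exact denom_congr2 x hx.1
  rw [e1, e2]
  rw [intervalIntegral.integral_const_mul,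
    intervalIntegral.integral_add ((rpow_intable _ (by norm_num) _ _ _).sub
      (rpow_intable _ (by norm_num) _ _ _)) (rpow_intable _ (by norm_num) _ _ _),
    intervalIntegral.integral_sub (rpow_intable _ (by norm_num) _ _ _)
      (rpow_intable _ (by norm_num) _ _ _),
    intervalIntegral.integral_const_mul, intervalIntegral.integral_const_mul,
    intervalIntegral.integral_const_mul,
    integral_rpow (Or.inl (by norm_num : (-1:ℝ) < 3/2)),
    integral_rpow (Or.inl (by norm_num : (-1:ℝ) < -(1/2))),
    integral_rpow (Or.inl (by norm_num : (-1:ℝ) < 1/2)),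
    integral_rpow (Or.inl (by norm_num : (-1:ℝ) < 3/2))]
  norm_num
  set v : ℝ := (Real.sqrt 2 / 2) ^ ((1:ℝ)/2) with hv
  have pw : ∀ n : ℕ, (Real.sqrt 2 / 2) ^ (((n:ℝ))/2) = v ^ n := by
    intro n
    rw [hv, ← Real.rpow_natCast ((Real.sqrt 2 / 2) ^ ((1:ℝ)/2)) n, ← Real.rpow_mul hc]
    ring_nf
  have hv2 : v ^ 2 = Real.sqrt 2 / 2 := by
    rw [← pw 2]; norm_num
  have hb : ∀ r : ℝ, (Real.sqrt 2) ^ r = (2:ℝ) ^ r * (Real.sqrt 2 / 2) ^ r := by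
    intro r
    have hh : (2:ℝ) * (Real.sqrt 2 / 2) = Real.sqrt 2 := by ring
    conv_lhs => rw [← hh]
    rw [Real.mul_rpow (by norm_num) hc]
  have h2half : (2:ℝ) ^ ((1:ℝ)/2) = Real.sqrt 2 := (Real.sqrt_eq_rpow 2).symm
  have h2a : (2:ℝ) ^ ((3:ℝ)/2) = 2 * Real.sqrt 2 := by
    rw [show (3:ℝ)/2 = (1/2) * 3 by norm_num, Real.rpow_mul (by norm_num), h2half,
      show (3:ℝ) = ((3:ℕ):ℝ) by norm_num, Real.rpow_natCast]
    linear_combination Real.sqrt 2 * h2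
  have h2b : (2:ℝ) ^ ((5:ℝ)/2) = 4 * Real.sqrt 2 := by
    rw [show (5:ℝ)/2 = (1/2) * 5 by norm_num, Real.rpow_mul (by norm_num), h2half,
      show (5:ℝ) = ((5:ℕ):ℝ) by norm_num, Real.rpow_natCast]
    linear_combination (Real.sqrt 2 ^ 3 + 2 * Real.sqrt 2) * h2
  have k1 : (Real.sqrt 2) ^ ((1:ℝ)/2) = Real.sqrt 2 * v := by
    rw [hb, h2half, hv, ← show ((1:ℕ):ℝ)/2 = (1:ℝ)/2 by norm_num, pw 1]
  have k3 : (Real.sqrt 2) ^ ((3:ℝ)/2) = 2 * Real.sqrt 2 * v ^ 3 := by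
    rw [hb, h2a, show (3:ℝ)/2 = ((3:ℕ):ℝ)/2 by norm_num, pw 3]
  have k5 : (Real.sqrt 2) ^ ((5:ℝ)/2) = 4 * Real.sqrt 2 * v ^ 5 := by
    rw [hb, h2b, show (5:ℝ)/2 = ((5:ℕ):ℝ)/2 by norm_num, pw 5]
  have c3 : (Real.sqrt 2 / 2) ^ ((3:ℝ)/2) = v ^ 3 := by
    rw [show (3:ℝ)/2 = ((3:ℕ):ℝ)/2 by norm_num, pw 3]
  have c5 : (Real.sqrt 2 / 2) ^ ((5:ℝ)/2) = v ^ 5 := by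
    rw [show (5:ℝ)/2 = ((5:ℕ):ℝ)/2 by norm_num, pw 5]
  rw [k1, k3, k5, c3, c5]
  have hs2 : Real.sqrt 2 ^ 2 = 2 := Real.sq_sqrt (by norm_num)
  linear_combination (-(32:ℝ)/3 * v + 8/3 * Real.sqrt 2 * v + 8/5 * (Real.sqrt 2)^2 * v
      + 16/5 * Real.sqrt 2 * v^3) * hv2
    + (-(16:ℝ)/3 * v^3 + 4/3 * v + 4/5 * Real.sqrt 2 * v) * hs2

lemma final_ratio :
    (19 * Real.sqrt 3 * ((Real.sqrt 6 / 3) ^ ((1:ℝ)/2)) / 30) /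
      (16 / 15 * ((Real.sqrt 2 / 2) ^ ((1:ℝ)/2)) * (4 * Real.sqrt 2 - 5)) =
        19 * (3:ℝ) ^ ((1:ℝ)/4) * (8 + 5 * Real.sqrt 2) / 224 := by
  set u : ℝ := (Real.sqrt 6 / 3) ^ ((1:ℝ)/2) with hu
  set v : ℝ := (Real.sqrt 2 / 2) ^ ((1:ℝ)/2) with hv
  set q3 : ℝ := (3:ℝ) ^ ((1:ℝ)/4) with hq3
  have h2 : Real.sqrt 2 ^ 2 = 2 := Real.sq_sqrt (by norm_num)
  have h3 : Real.sqrt 3 ^ 2 = 3 := Real.sq_sqrt (by norm_num)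
  have hq3sq : q3 ^ 2 = Real.sqrt 3 := by
    rw [hq3, ← Real.rpow_natCast ((3:ℝ) ^ ((1:ℝ)/4)) 2, ← Real.rpow_mul (by norm_num)]
    rw [Real.sqrt_eq_rpow]; norm_num
  have hu2 : u ^ 2 = Real.sqrt 6 / 3 := by
    rw [hu, ← Real.rpow_natCast ((Real.sqrt 6 / 3) ^ ((1:ℝ)/2)) 2,
      ← Real.rpow_mul (by positivity)]
    norm_num
  have hv2 : v ^ 2 = Real.sqrt 2 / 2 := by
    rw [hv, ← Real.rpow_natCast ((Real.sqrt 2 / 2) ^ ((1:ℝ)/2)) 2,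
      ← Real.rpow_mul (by positivity)]
    norm_num
  have h23 : Real.sqrt 2 * Real.sqrt 3 = Real.sqrt 6 := by
    rw [← Real.sqrt_mul (by norm_num)]; norm_num
  have key : Real.sqrt 3 * u = Real.sqrt 2 * q3 * v := by
    have hL : (Real.sqrt 3 * u) ^ 2 = Real.sqrt 6 := by
      rw [mul_pow, hu2, h3]; ring
    have hR : (Real.sqrt 2 * q3 * v) ^ 2 = Real.sqrt 6 := by
      rw [mul_pow, mul_pow, hq3sq, hv2, ← h23]
      linear_combination (Real.sqrt 3 * Real.sqrt 2 / 2) * h2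
    have hLn : 0 ≤ Real.sqrt 3 * u := by positivity
    have hRn : 0 ≤ Real.sqrt 2 * q3 * v := by positivity
    calc Real.sqrt 3 * u = Real.sqrt ((Real.sqrt 3 * u) ^ 2) := (Real.sqrt_sq hLn).symm
      _ = Real.sqrt ((Real.sqrt 2 * q3 * v) ^ 2) := by rw [hL, hR]
      _ = Real.sqrt 2 * q3 * v := Real.sqrt_sq hRn
  have hvpos : 0 < v := by
    rw [hv]; positivity
  have h45 : 4 * Real.sqrt 2 - 5 > 0 := by
    nlinarith [h2, Real.sqrt_nonneg 2]
  rw [div_eq_div_iff (by positivity) (by norm_num : (224:ℝ) ≠ 0)]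
  linear_combination (4256/30 : ℝ) * key + (-(6080:ℝ)/15) * q3 * v * h2

end OctTorricelli

/-- The Torricelli number of the regular octahedron: the ratio of the maximal drainage
integral (face down) to the minimal one (vertex down) equals `19·3^{1/4}·(8+5√2)/224`. -/
theorem octahedron_torricelli_number :
    (∫ h in (0:ℝ)..(Real.sqrt 6 / 3), octAreaMax h * (Real.sqrt h)⁻¹) /
      (∫ h in (0:ℝ)..Real.sqrt 2, octAreaMin h * (Real.sqrt h)⁻¹) =
        19 * (3:ℝ) ^ ((1:ℝ)/4) * (8 + 5 * Real.sqrt 2) / 224 := by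
  rw [OctTorricelli.numer_val, OctTorricelli.denom_val]
  exact OctTorricelli.final_ratio
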